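/- Let U be a unitary on H satisfying the SSQW conditions and Assumption A, and let {η₁ˣ, η₂ˣ}_{x∈ℤ} be orthonormal bases of the H_x with U H_x ⊆ ℂη₁^{x−1} ⊕ H_x ⊕ ℂη₂^{x+1} for all x ∈ ℤ. Then for each x ∈ ℤ there exists an orthonormal basis {ζ₁ˣ, ζ₂ˣ} of H_x such that U ζ₁ˣ ∈ ℂη₁ˣ + ℂη₂^{x+1} and U ζ₂ˣ ∈ ℂη₁^{x−1} + ℂη₂ˣ. -/

import Mathlib

noncomputable section

/-- `H = ⊕_{x∈ℤ} H_x`, the ℓ² direct sum with each `H_x` a copy of `ℂ²`. -/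
abbrev H : Type := lp (fun _ : ℤ × Fin 2 => ℂ) 2

/-- The canonical orthonormal basis vector `eᵢˣ` of `H_x` viewed in `H`. -/
def e (x : ℤ) (i : Fin 2) : H := lp.single 2 (x, i) 1

/-- The subspace `H_x` of `H`. -/
def Hx (x : ℤ) : Submodule ℂ H := Submodule.span ℂ {e x 0, e x 1}

/-- The rank-one operator `|u⟩⟨v| : w ↦ ⟨v, w⟩ u`. -/
def ketbra (u v : H) : H →L[ℂ] H := ((innerSL ℂ) v).smulRight u

/-- The orthogonal projection of `H` onto `H_x`. -/
def P (x : ℤ) : H →L[ℂ] H := ketbra (e x 0) (e x 0) + ketbra (e x 1) (e x 1)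

/-- A unitary (linear isometric equivalence) viewed as a continuous linear map. -/
def clm (U : H ≃ₗᵢ[ℂ] H) : H →L[ℂ] H := U.toLinearIsometry.toContinuousLinearMap

/-- `{u, v}` is an orthonormal basis of the two dimensional space `H_x`. -/
def ONBx (x : ℤ) (u v : H) : Prop :=
  u ∈ Hx x ∧ v ∈ Hx x ∧ ‖u‖ = 1 ∧ ‖v‖ = 1 ∧ (inner ℂ u v : ℂ) = 0

/-- The SSQW conditions: `U H_x ⊆ H_{x-1} ⊕ H_x ⊕ H_{x+1}` and
`rank(P_{x±1} U P_x) ≤ 1` for all `x`. -/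
def SSQW (U : H ≃ₗᵢ[ℂ] H) : Prop :=
  (∀ x : ℤ, ∀ ψ ∈ Hx x, U ψ ∈ Hx (x - 1) ⊔ Hx x ⊔ Hx (x + 1)) ∧
  (∀ x : ℤ, LinearMap.rank (((P (x + 1)).comp ((clm U).comp (P x))).toLinearMap) ≤ 1) ∧
  (∀ x : ℤ, LinearMap.rank (((P (x - 1)).comp ((clm U).comp (P x))).toLinearMap) ≤ 1)

/-- Assumption A: `U P_y` is never of the form `|v⟩⟨ζ₁| + |w⟩⟨ζ₂|` with
`{ζ₁, ζ₂}` an orthonormal basis of `H_y` and unit vectors `v, w` with either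
`v ∈ H_{y-1}, w ∈ H_y` or `v ∈ H_y, w ∈ H_{y+1}`. -/
def AssumptionA (U : H ≃ₗᵢ[ℂ] H) : Prop :=
  ¬ ∃ (y : ℤ) (ζ₁ ζ₂ v w : H), ONBx y ζ₁ ζ₂ ∧ ‖v‖ = 1 ∧ ‖w‖ = 1 ∧
    ((v ∈ Hx (y - 1) ∧ w ∈ Hx y) ∨ (v ∈ Hx y ∧ w ∈ Hx (y + 1))) ∧
    (clm U).comp (P y) = ketbra v ζ₁ + ketbra w ζ₂

/-!
Put `S = U⁻¹{η₁^{x-1}, η₂^x}` and `T = U⁻¹{η₁^x, η₂^{x+1}}`. Taking adjoints in the range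
condition shows that the vectors of `S` live in `H_{x-1} ⊕ H_x` and those of `T` in
`H_x ⊕ H_{x+1}`; as `S ⟂ T` and the two supports only share `H_x`, the projections `P_x S` and
`P_x T` are orthogonal. Neither projection vanishes: if `P_x T = 0`, say, then `T` is an
orthonormal basis of `H_{x+1}` which `U` maps to `η₁^x ∈ H_x`, `η₂^{x+1} ∈ H_{x+1}`, against
Assumption A. Normalising a nonzero vector of `P_x T` and of `P_x S` gives `ζ₁ ⟂ S` and
`ζ₂ ⟂ T`, i.e. `U ζ₁ ⟂ η₁^{x-1}, η₂^x` and `U ζ₂ ⟂ η₁^x, η₂^{x+1}`; since `U H_x` lies in the span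
of these four orthonormal vectors, `U ζ₁` and `U ζ₂` lie in the spans of the remaining two.
-/

open scoped InnerProductSpace ComplexConjugate

section InnerProductSpace

variable {𝕜 E : Type*} [RCLike 𝕜] [NormedAddCommGroup E] [InnerProductSpace 𝕜 E]

lemma Submodule.mem_of_mem_sup_of_mem_orthogonal {A B : Submodule 𝕜 E} (hAB : A ⟂ B) {v : E}
    (hv : v ∈ A ⊔ B) (hvA : v ∈ Aᗮ) : v ∈ B := by
  have : (B ⊔ A) ⊓ Aᗮ = B := by
    rw [sup_inf_assoc_of_le A hAB.symm, Submodule.inf_orthogonal_eq_bot, sup_bot_eq]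
  exact this ▸ ⟨sup_comm A B ▸ hv, hvA⟩

lemma Submodule.mem_orthogonal_span_of_forall {s : Set E} {v : E} (h : ∀ u ∈ s, ⟪u, v⟫_𝕜 = 0) :
    v ∈ (Submodule.span 𝕜 s)ᗮ :=
  (Submodule.isOrtho_span (t := {v}).2 fun u hu _ hv => hv ▸ h u hu).symm
    (Submodule.mem_span_singleton_self v)

lemma LinearIsometryEquiv.apply_mem_orthogonal_span (U : E ≃ₗᵢ[𝕜] E) {s : Set E} {v : E}
    (h : ∀ u ∈ U.symm '' s, ⟪u, v⟫_𝕜 = 0) : U v ∈ (Submodule.span 𝕜 s)ᗮ :=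
  Submodule.mem_orthogonal_span_of_forall fun u hu => by
    simpa using (U.symm.inner_map_eq_flip u v).symm.trans (h _ (Set.mem_image_of_mem _ hu))

end InnerProductSpace

lemma inner_e_left (x : ℤ) (i : Fin 2) (v : H) : ⟪e x i, v⟫_ℂ = v (x, i) := by
  simp [e, lp.inner_single_left]

lemma inner_e_e (x y : ℤ) (i j : Fin 2) :
    ⟪e x i, e y j⟫_ℂ = if (x, i) = (y, j) then 1 else 0 := by
  rw [inner_e_left, e, lp.single_apply, Pi.single_apply]

lemma e_mem_Hx (x : ℤ) (i : Fin 2) : e x i ∈ Hx x :=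
  Submodule.subset_span (by fin_cases i <;> simp)

lemma Hx_isOrtho {x y : ℤ} (hxy : x ≠ y) : Hx x ⟂ Hx y := by
  simp only [Hx, Submodule.isOrtho_span]
  rintro u hu v hv
  rcases hu with rfl | rfl <;> rcases hv with rfl | rfl <;> simp [inner_e_e, hxy]

lemma ONBx_e (x : ℤ) : ONBx x (e x 0) (e x 1) :=
  ⟨e_mem_Hx x 0, e_mem_Hx x 1, by simp [e], by simp [e], by simp [inner_e_e]⟩

instance (x : ℤ) : FiniteDimensional ℂ (Hx x) :=
  FiniteDimensional.span_of_finite ℂ (Set.toFinite _)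

lemma finrank_Hx_le (x : ℤ) : Module.finrank ℂ (Hx x) ≤ 2 := by
  classical
  exact (finrank_span_le_card _).trans (by simpa using Finset.card_le_two)

lemma ONBx.span_eq {x : ℤ} {u v : H} (h : ONBx x u v) : Submodule.span ℂ {u, v} = Hx x := by
  obtain ⟨hu, hv, hnu, hnv, huv⟩ := h
  have hon : Orthonormal ℂ ![u, v] := by
    rw [orthonormal_iff_ite]
    intro i j
    fin_cases i <;> fin_cases j <;>
      simp [hnu, hnv, huv, inner_self_eq_norm_sq_to_K, inner_eq_zero_symm.1 huv]
  have hrank := finrank_span_eq_card hon.linearIndependent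
  rw [Matrix.range_cons_cons_empty, Fintype.card_fin] at hrank
  refine Submodule.eq_of_le_of_finrank_le ?_ (hrank ▸ finrank_Hx_le x)
  rw [Submodule.span_le]
  rintro w (rfl | rfl) <;> assumption

lemma ONBx.eq_add {x : ℤ} {u v w : H} (h : ONBx x u v) (hw : w ∈ Hx x) :
    w = ⟪u, w⟫_ℂ • u + ⟪v, w⟫_ℂ • v := by
  obtain ⟨s, t, rfl⟩ := Submodule.mem_span_pair.1 (h.span_eq ▸ hw)
  obtain ⟨-, -, hnu, hnv, huv⟩ := h
  simp [inner_self_eq_norm_sq_to_K, hnu, hnv, huv, inner_eq_zero_symm.1 huv]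

lemma P_apply (x : ℤ) (v : H) : P x v = v (x, 0) • e x 0 + v (x, 1) • e x 1 := by
  simp [P, ketbra, inner_e_left]

lemma P_apply_apply (x y : ℤ) (j : Fin 2) (v : H) :
    P x v (y, j) = if y = x then v (y, j) else 0 := by
  rw [P_apply]
  simp only [e, lp.coeFn_add, lp.coeFn_smul, Pi.add_apply, Pi.smul_apply, lp.single_apply,
    Pi.single_apply, Prod.mk.injEq]
  rcases eq_or_ne y x with rfl | h
  · fin_cases j <;> simp
  · simp [h]

lemma inner_P_left (x : ℤ) (u v : H) : ⟪P x u, v⟫_ℂ = ⟪u, P x v⟫_ℂ := by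
  have inner_e_right (i : Fin 2) (w : H) : ⟪w, e x i⟫_ℂ = conj (w (x, i)) := by
    rw [← inner_conj_symm, inner_e_left]
  simp only [P_apply, inner_add_left, inner_add_right, inner_smul_left, inner_smul_right,
    inner_e_left, inner_e_right]
  ring

lemma inner_P_eq_inner {x : ℤ} {u v : H} (h : ∀ y ≠ x, ∀ j, u (y, j) = 0 ∨ v (y, j) = 0) :
    ⟪P x u, v⟫_ℂ = ⟪u, v⟫_ℂ := by
  rw [lp.inner_eq_tsum, lp.inner_eq_tsum]
  refine tsum_congr fun ⟨y, j⟩ => ?_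
  rw [P_apply_apply]
  split_ifs with hy
  · rfl
  · rcases h y hy j with h0 | h0 <;> simp [h0]

lemma P_mem_Hx (x : ℤ) (v : H) : P x v ∈ Hx x := by
  rw [P_apply]
  exact add_mem (Submodule.smul_mem _ _ (e_mem_Hx x 0)) (Submodule.smul_mem _ _ (e_mem_Hx x 1))

lemma mem_Hx_of_apply_eq_zero {x : ℤ} {v : H} (h : ∀ y ≠ x, ∀ j, v (y, j) = 0) : v ∈ Hx x := by
  have : P x v = v := by
    ext ⟨y, j⟩
    rw [P_apply_apply]
    split_ifs with hy
    · rfl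
    · exact (h y hy j).symm
  exact this ▸ P_mem_Hx x v

lemma mem_Hx_of_P_eq_zero {x y : ℤ} {v : H} (hv : ∀ w, w ≠ x → w ≠ y → ∀ j, v (w, j) = 0)
    (hP : P x v = 0) : v ∈ Hx y := by
  refine mem_Hx_of_apply_eq_zero fun w hwy j => ?_
  rcases eq_or_ne w x with rfl | hwx
  · simpa [hP] using (P_apply_apply w w j v).symm
  · exact hv w hwx hwy j

lemma P_apply_of_mem {x : ℤ} {v : H} (hv : v ∈ Hx x) : P x v = v := by
  rw [P_apply, ← inner_e_left, ← inner_e_left]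
  exact ((ONBx_e x).eq_add hv).symm

lemma ONBx.P_eq {x : ℤ} {u v : H} (h : ONBx x u v) : P x = ketbra u u + ketbra v v := by
  ext ψ
  rw [h.eq_add (P_mem_Hx x ψ), ← inner_P_left, ← inner_P_left, P_apply_of_mem h.1,
    P_apply_of_mem h.2.1]
  rfl

lemma clm_comp_ketbra (U : H ≃ₗᵢ[ℂ] H) (u v : H) :
    (clm U).comp (ketbra u v) = ketbra (U u) v := by
  ext ψ
  simp [clm, ketbra]

lemma AssumptionA.not_mapsTo {U : H ≃ₗᵢ[ℂ] H} (hA : AssumptionA U) {y : ℤ} {ζ₁ ζ₂ : H}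
    (h : ONBx y ζ₁ ζ₂) :
    ¬ ((U ζ₁ ∈ Hx (y - 1) ∧ U ζ₂ ∈ Hx y) ∨ (U ζ₁ ∈ Hx y ∧ U ζ₂ ∈ Hx (y + 1))) := fun hmem =>
  hA ⟨y, ζ₁, ζ₂, U ζ₁, U ζ₂, h, by simpa using h.2.2.1, by simpa using h.2.2.2.1, hmem, by
    rw [h.P_eq, ContinuousLinearMap.comp_add, clm_comp_ketbra, clm_comp_ketbra]⟩

lemma ONBx_normalize {x : ℤ} {u v : H} (hu : u ∈ Hx x) (hv : v ∈ Hx x) (hu0 : u ≠ 0)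
    (hv0 : v ≠ 0) (huv : ⟪u, v⟫_ℂ = 0) :
    ONBx x ((‖u‖⁻¹ : ℂ) • u) ((‖v‖⁻¹ : ℂ) • v) :=
  ⟨Submodule.smul_mem _ _ hu, Submodule.smul_mem _ _ hv, norm_smul_inv_norm hu0,
    norm_smul_inv_norm hv0, by simp [huv]⟩

lemma inner_P_eq_inner_of_support {x : ℤ} {s t : H}
    (hs : ∀ y, y ≠ x - 1 → y ≠ x → ∀ j, s (y, j) = 0)
    (ht : ∀ y, y ≠ x → y ≠ x + 1 → ∀ j, t (y, j) = 0) : ⟪P x s, t⟫_ℂ = ⟪s, t⟫_ℂ :=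
  inner_P_eq_inner fun y hy j =>
    if h : y = x - 1 then Or.inr (ht y hy (by omega) j) else Or.inl (hs y h hy j)

lemma exists_ONBx_orthogonal {x : ℤ} {S T : Set H}
    (hS : ∀ s ∈ S, ∀ y, y ≠ x - 1 → y ≠ x → ∀ j, s (y, j) = 0)
    (hT : ∀ t ∈ T, ∀ y, y ≠ x → y ≠ x + 1 → ∀ j, t (y, j) = 0)
    (hST : ∀ s ∈ S, ∀ t ∈ T, ⟪s, t⟫_ℂ = 0)
    (hS0 : ∃ s ∈ S, P x s ≠ 0) (hT0 : ∃ t ∈ T, P x t ≠ 0) :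
    ∃ ζ₁ ζ₂ : H, ONBx x ζ₁ ζ₂ ∧ (∀ s ∈ S, ⟪s, ζ₁⟫_ℂ = 0) ∧ (∀ t ∈ T, ⟪t, ζ₂⟫_ℂ = 0) := by
  obtain ⟨s₀, hs₀, hs₀0⟩ := hS0
  obtain ⟨t₀, ht₀, ht₀0⟩ := hT0
  have hPST : ∀ s ∈ S, ∀ t ∈ T, ⟪P x s, t⟫_ℂ = 0 := fun s hs t ht =>
    (inner_P_eq_inner_of_support (hS s hs) (hT t ht)).trans (hST s hs t ht)
  refine ⟨_, _, ONBx_normalize (P_mem_Hx x t₀) (P_mem_Hx x s₀) ht₀0 hs₀0 ?_,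
    fun s hs => ?_, fun t ht => ?_⟩
  · rw [← inner_P_left, P_apply_of_mem (P_mem_Hx x t₀), ← inner_conj_symm, ← inner_P_left,
      hPST s₀ hs₀ t₀ ht₀, map_zero]
  · rw [inner_smul_right, ← inner_P_left, hPST s hs t₀ ht₀, mul_zero]
  · rw [inner_smul_right, ← inner_P_left, ← inner_conj_symm, ← inner_P_left, hPST s₀ hs₀ t ht,
      map_zero, mul_zero]

section Adapted

variable {η₁ η₂ : ℤ → H}

lemma inner_eta₁_eta₂ (hη : ∀ x, ONBx x (η₁ x) (η₂ x)) (z w : ℤ) : ⟪η₁ z, η₂ w⟫_ℂ = 0 := by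
  rcases eq_or_ne z w with rfl | h
  · exact (hη z).2.2.2.2
  · exact (Hx_isOrtho h).inner_eq (hη z).1 (hη w).2.1

lemma isOrtho_span_eta (hη : ∀ x, ONBx x (η₁ x) (η₂ x)) (x : ℤ) :
    Submodule.span ℂ {η₁ (x - 1), η₂ x} ⟂ Submodule.span ℂ {η₁ x, η₂ (x + 1)} := by
  rw [Submodule.isOrtho_span]
  rintro _ (rfl | rfl) _ (rfl | rfl)
  · exact (Hx_isOrtho (by omega)).inner_eq (hη _).1 (hη _).1
  · exact inner_eta₁_eta₂ hη _ _
  · exact inner_eq_zero_symm.1 (inner_eta₁_eta₂ hη _ _)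
  · exact (Hx_isOrtho (by omega)).inner_eq (hη _).2.1 (hη _).2.1

lemma sup_Hx_sup_le_sup_span (hη : ∀ x, ONBx x (η₁ x) (η₂ x)) (x : ℤ) :
    ℂ ∙ η₁ (x - 1) ⊔ Hx x ⊔ ℂ ∙ η₂ (x + 1) ≤
      Submodule.span ℂ {η₁ (x - 1), η₂ x} ⊔ Submodule.span ℂ {η₁ x, η₂ (x + 1)} := by
  rw [← (hη x).span_eq]
  simp only [Submodule.span_insert]
  exact le_of_eq (by ac_rfl)

lemma apply_eq_zero_of_mem_image_symm {U : H ≃ₗᵢ[ℂ] H} (hη : ∀ x, ONBx x (η₁ x) (η₂ x))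
    (hrange : ∀ x : ℤ, ∀ ψ ∈ Hx x, U ψ ∈ ℂ ∙ η₁ (x - 1) ⊔ Hx x ⊔ ℂ ∙ η₂ (x + 1))
    {z z' : ℤ} (hz : z' = z + 1) {t : H} (ht : t ∈ U.symm '' {η₁ z, η₂ z'})
    {y : ℤ} (hy : y ≠ z) (hy' : y ≠ z') (j : Fin 2) : t (y, j) = 0 := by
  subst hz
  have key : ∀ η ∈ (ℂ ∙ η₁ (y - 1) ⊔ Hx y ⊔ ℂ ∙ η₂ (y + 1))ᗮ, U.symm η (y, j) = 0 :=
    fun η hη' => by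
      rw [← inner_e_left, ← U.inner_map_eq_flip]
      exact Submodule.inner_right_of_mem_orthogonal (hrange y _ (e_mem_Hx y j)) hη'
  simp only [← Submodule.inf_orthogonal, Submodule.mem_inf,
    Submodule.mem_orthogonal_singleton_iff_inner_left] at key
  obtain ⟨η, rfl | rfl, rfl⟩ := ht <;> refine key _ ⟨⟨?_, ?_⟩, ?_⟩
  · exact (Hx_isOrtho (by omega)).inner_eq (hη _).1 (hη _).1
  · exact Hx_isOrtho (Ne.symm hy) (hη z).1
  · exact inner_eta₁_eta₂ hη _ _
  · exact inner_eq_zero_symm.1 (inner_eta₁_eta₂ hη _ _)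
  · exact Hx_isOrtho (Ne.symm hy') (hη _).2.1
  · exact (Hx_isOrtho (by omega)).inner_eq (hη _).2.1 (hη _).2.1

lemma AssumptionA.exists_P_symm_ne_zero {U : H ≃ₗᵢ[ℂ] H} (hA : AssumptionA U)
    (hη : ∀ x, ONBx x (η₁ x) (η₂ x))
    (hrange : ∀ x : ℤ, ∀ ψ ∈ Hx x, U ψ ∈ ℂ ∙ η₁ (x - 1) ⊔ Hx x ⊔ ℂ ∙ η₂ (x + 1))
    {z z' : ℤ} (hz : z' = z + 1) {x y : ℤ} (hxy : x = z ∧ y = z' ∨ x = z' ∧ y = z) :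
    ∃ t ∈ U.symm '' {η₁ z, η₂ z'}, P x t ≠ 0 := by
  by_contra! hP
  have hmem : ∀ t ∈ U.symm '' {η₁ z, η₂ z'}, t ∈ Hx y := fun t ht =>
    mem_Hx_of_P_eq_zero (fun w hwx hwy j =>
      apply_eq_zero_of_mem_image_symm hη hrange hz ht (by omega) (by omega) j) (hP t ht)
  have honb : ONBx y (U.symm (η₁ z)) (U.symm (η₂ z')) :=
    ⟨hmem _ (Set.mem_image_of_mem _ (by simp)), hmem _ (Set.mem_image_of_mem _ (by simp)),
      by simpa using (hη z).2.2.1, by simpa using (hη z').2.2.2.1,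
      by simpa using inner_eta₁_eta₂ hη z z'⟩
  apply hA.not_mapsTo honb
  simp only [LinearIsometryEquiv.apply_symm_apply]
  subst hz
  rcases hxy with ⟨rfl, rfl⟩ | ⟨rfl, rfl⟩
  · exact Or.inl ⟨by simpa using (hη x).1, (hη _).2.1⟩
  · exact Or.inr ⟨(hη y).1, (hη _).2.1⟩

end Adapted

theorem exists_zeta_basis_general (U : H ≃ₗᵢ[ℂ] H) (hA : AssumptionA U)
    (η₁ η₂ : ℤ → H) (hη : ∀ x : ℤ, ONBx x (η₁ x) (η₂ x))
    (hrange : ∀ x : ℤ, ∀ ψ ∈ Hx x,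
      U ψ ∈ Submodule.span ℂ {η₁ (x - 1)} ⊔ Hx x ⊔ Submodule.span ℂ {η₂ (x + 1)})
    (x : ℤ) :
    ∃ ζ₁ ζ₂ : H, ONBx x ζ₁ ζ₂ ∧
      U ζ₁ ∈ Submodule.span ℂ {η₁ x} ⊔ Submodule.span ℂ {η₂ (x + 1)} ∧
      U ζ₂ ∈ Submodule.span ℂ {η₁ (x - 1)} ⊔ Submodule.span ℂ {η₂ x} := by
  have hAB := isOrtho_span_eta hη x
  have hUζ : ∀ ζ ∈ Hx x, U ζ ∈ _ := fun ζ hζ => sup_Hx_sup_le_sup_span hη x (hrange x ζ hζ)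
  obtain ⟨ζ₁, ζ₂, hζ, hζ₁, hζ₂⟩ := exists_ONBx_orthogonal
    (fun s hs y h h' j =>
      apply_eq_zero_of_mem_image_symm hη hrange (sub_add_cancel x 1).symm hs h h' j)
    (fun t ht y h h' j => apply_eq_zero_of_mem_image_symm hη hrange rfl ht h h' j)
    (Set.forall_mem_image.2 fun p hp => Set.forall_mem_image.2 fun q hq =>
      (U.symm.inner_map_map p q).trans
        (hAB.inner_eq (Submodule.subset_span hp) (Submodule.subset_span hq)))
    (hA.exists_P_symm_ne_zero hη hrange (sub_add_cancel x 1).symm (Or.inr ⟨rfl, rfl⟩))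
    (hA.exists_P_symm_ne_zero hη hrange rfl (Or.inl ⟨rfl, rfl⟩))
  simp only [← Submodule.span_insert]
  refine ⟨ζ₁, ζ₂, hζ, ?_, ?_⟩
  · exact Submodule.mem_of_mem_sup_of_mem_orthogonal hAB (hUζ ζ₁ hζ.1)
      (U.apply_mem_orthogonal_span hζ₁)
  · refine Submodule.mem_of_mem_sup_of_mem_orthogonal hAB.symm ?_
      (U.apply_mem_orthogonal_span hζ₂)
    rw [sup_comm]
    exact hUζ ζ₂ hζ.2.1

/-- Under the SSQW conditions and Assumption A, for each `x`
there is an orthonormal basis `{ζ₁ˣ, ζ₂ˣ}` of `H_x` with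
`U ζ₁ˣ ∈ ℂη₁ˣ + ℂη₂^{x+1}` and `U ζ₂ˣ ∈ ℂη₁^{x−1} + ℂη₂ˣ`. -/
theorem exists_zeta_basis (U : H ≃ₗᵢ[ℂ] H) (hU : SSQW U) (hA : AssumptionA U)
    (η₁ η₂ : ℤ → H) (hη : ∀ x : ℤ, ONBx x (η₁ x) (η₂ x))
    (hrange : ∀ x : ℤ, ∀ ψ ∈ Hx x,
      U ψ ∈ Submodule.span ℂ {η₁ (x - 1)} ⊔ Hx x ⊔ Submodule.span ℂ {η₂ (x + 1)})
    (x : ℤ) :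
    ∃ ζ₁ ζ₂ : H, ONBx x ζ₁ ζ₂ ∧
      U ζ₁ ∈ Submodule.span ℂ {η₁ x} ⊔ Submodule.span ℂ {η₂ (x + 1)} ∧
      U ζ₂ ∈ Submodule.span ℂ {η₁ (x - 1)} ⊔ Submodule.span ℂ {η₂ x} :=
  exists_zeta_basis_general U hA η₁ η₂ hη hrange x
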